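/- arXiv:2307.04714 — 5 statements merged into one kernel-verified Lean document; each statement's English description precedes it below -/
import Mathlib

section
/- Let N ≥ 3, σ > -2, m ∈ (0,1), and p = p_s(σ) = m(N+2σ+2)/(N-2). Then for every C > 0 the function U_C(x) = [(N-2)(N+σ)C / (|x|^{σ+2} + C)^2]^{(N-2)/(2m(σ+2))} is a classical stationary solution of u_t = Δu^m + |x|^σ u^p on ℝ^N \ {0}, i.e. Δ(U_C^m)(x) + |x|^σ U_C(x)^p = 0 for all x ≠ 0. -/
open Real Filter Set

/-- for p = p_s(σ), the radial profiles
U_C(r) = [(N-2)(N+σ)C/(r^{σ+2}+C)²]^{(N-2)/(2m(σ+2))} are stationary solutions: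
(U_C^m)'' + (N-1)/r (U_C^m)' + r^σ U_C^p = 0 for all r > 0
(the radial form of Δ(U_C^m) + |x|^σ U_C^p = 0 on ℝ^N \ {0}). -/
theorem stmt5 (N σ m C p : ℝ) (hN : 3 ≤ N) (hσ : -2 < σ) (hm0 : 0 < m) (hm1 : m < 1)
    (hC : 0 < C) (hp : p = m * (N + 2 * σ + 2) / (N - 2)) :
    ∀ r : ℝ, 0 < r →
      deriv (deriv (fun s : ℝ =>
          (((N - 2) * (N + σ) * C / ((s ^ (σ + 2) + C) ^ 2)) ^ ((N - 2) / (2 * m * (σ + 2)))) ^ m)) r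
      + (N - 1) / r * deriv (fun s : ℝ =>
          (((N - 2) * (N + σ) * C / ((s ^ (σ + 2) + C) ^ 2)) ^ ((N - 2) / (2 * m * (σ + 2)))) ^ m) r
      + r ^ σ * (((N - 2) * (N + σ) * C / ((r ^ (σ + 2) + C) ^ 2)) ^ ((N - 2) / (2 * m * (σ + 2)))) ^ p
      = 0 := by
  intro r hr
  have hN2 : (0:ℝ) < N - 2 := by linarith
  have hσ2 : (0:ℝ) < σ + 2 := by linarith
  have hNσ : (0:ℝ) < N + σ := by linarith
  have hA : (0:ℝ) < (N - 2) * (N + σ) * C := by positivity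
  set A := (N - 2) * (N + σ) * C with hAdef
  set e := (N - 2) / (2 * m * (σ + 2)) with hedef
  set β := (N - 2) / (σ + 2) with hβdef
  have hem : e * m = β / 2 := by
    rw [hedef, hβdef]; field_simp
  have hep : e * p = β / 2 + 1 := by
    rw [hedef, hβdef, hp]; field_simp; ring
  set f : ℝ → ℝ := fun s => ((A / ((s ^ (σ + 2) + C) ^ 2)) ^ e) ^ m with hfdef
  set g : ℝ → ℝ := fun s => A ^ (β / 2) * (s ^ (σ + 2) + C) ^ (-β) with hgdef
  set g1 : ℝ → ℝ := fun s =>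
    (A ^ (β / 2) * (-β * (σ + 2))) * ((s ^ (σ + 2) + C) ^ (-β - 1) * s ^ (σ + 1)) with hg1def
  have hDpos : ∀ s : ℝ, 0 < s → 0 < s ^ (σ + 2) + C := by
    intro s hs; positivity
  -- f = g on the positive axis
  have hfg : ∀ s : ℝ, 0 < s → f s = g s := by
    intro s hs
    have hD := hDpos s hs
    have hbase : (0:ℝ) ≤ A / ((s ^ (σ + 2) + C) ^ 2) := by positivity
    rw [hfdef, hgdef]
    simp only
    rw [← Real.rpow_mul hbase, hem, Real.div_rpow hA.le (by positivity),
      ← Real.rpow_two, ← Real.rpow_mul hD.le, show 2 * (β / 2) = β by ring,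
      Real.rpow_neg hD.le, div_eq_mul_inv]
  -- derivative of the inner function
  have hDder : ∀ s : ℝ, 0 < s →
      HasDerivAt (fun t : ℝ => t ^ (σ + 2) + C) ((σ + 2) * s ^ (σ + 1)) s := by
    intro s hs
    have h := (Real.hasDerivAt_rpow_const (p := σ + 2) (Or.inl hs.ne')).add_const C
    rwa [show σ + 2 - 1 = σ + 1 by ring] at h
  -- derivative of g
  have hgder : ∀ s : ℝ, 0 < s → HasDerivAt g (g1 s) s := by
    intro s hs
    have h := ((hDder s hs).rpow_const (p := -β) (Or.inl (hDpos s hs).ne')).const_mul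
      (A ^ (β / 2))
    rw [hgdef, hg1def]
    convert h using 1
    · rfl
    · rfl
    · ring
  -- first derivative of f on the positive axis
  have hd1 : ∀ s : ℝ, 0 < s → deriv f s = g1 s := by
    intro s hs
    have heq : f =ᶠ[nhds s] g :=
      eventually_of_mem (Ioi_mem_nhds hs) (fun t ht => hfg t ht)
    rw [heq.deriv_eq, (hgder s hs).deriv]
  -- second derivative of f at r
  have hDr := hDpos r hr
  have hg1der : HasDerivAt g1
      ((A ^ (β / 2) * (-β * (σ + 2))) *
        (((σ + 2) * r ^ (σ + 1) * (-β - 1) * (r ^ (σ + 2) + C) ^ (-β - 1 - 1)) * r ^ (σ + 1)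
          + (r ^ (σ + 2) + C) ^ (-β - 1) * ((σ + 1) * r ^ (σ + 1 - 1)))) r := by
    have h1 : HasDerivAt (fun s : ℝ => (s ^ (σ + 2) + C) ^ (-β - 1))
        ((σ + 2) * r ^ (σ + 1) * (-β - 1) * (r ^ (σ + 2) + C) ^ (-β - 1 - 1)) r :=
      (hDder r hr).rpow_const (Or.inl hDr.ne')
    have h2 : HasDerivAt (fun s : ℝ => s ^ (σ + 1)) ((σ + 1) * r ^ (σ + 1 - 1)) r :=
      Real.hasDerivAt_rpow_const (Or.inl hr.ne')
    exact (h1.mul h2).const_mul _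
  have hdd : deriv (deriv f) r =
      (A ^ (β / 2) * (-β * (σ + 2))) *
        (((σ + 2) * r ^ (σ + 1) * (-β - 1) * (r ^ (σ + 2) + C) ^ (-β - 1 - 1)) * r ^ (σ + 1)
          + (r ^ (σ + 2) + C) ^ (-β - 1) * ((σ + 1) * r ^ (σ + 1 - 1))) := by
    have heq : deriv f =ᶠ[nhds r] g1 :=
      eventually_of_mem (Ioi_mem_nhds hr) (fun t ht => hd1 t ht)
    exact heq.deriv_eq.trans hg1der.deriv
  -- the reaction term
  have hreact : ((A / ((r ^ (σ + 2) + C) ^ 2)) ^ e) ^ p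
      = A ^ (β / 2) * A * (r ^ (σ + 2) + C) ^ (-(β + 2)) := by
    have hbase : (0:ℝ) ≤ A / ((r ^ (σ + 2) + C) ^ 2) := by positivity
    rw [← Real.rpow_mul hbase, hep, Real.div_rpow hA.le (by positivity),
      ← Real.rpow_two, ← Real.rpow_mul hDr.le, show 2 * (β / 2 + 1) = β + 2 by ring,
      Real.rpow_neg hDr.le, div_eq_mul_inv, Real.rpow_add hA, Real.rpow_one,
      ← Real.rpow_neg hDr.le]
  rw [hdd, hd1 r hr, hreact, hg1def]
  simp only
  -- normalize the rpow exponents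
  rw [show -β - 1 - 1 = -(β + 2) by ring, show σ + 1 - 1 = σ by ring]
  have hDD : (r ^ (σ + 2) + C) ^ (-β - 1) = (r ^ (σ + 2) + C) ^ (-(β + 2)) * (r ^ (σ + 2) + C) := by
    rw [show -β - 1 = -(β + 2) + 1 by ring, Real.rpow_add hDr, Real.rpow_one]
  have hrr : r ^ (σ + 1) = r ^ σ * r := by
    rw [show σ + 1 = σ + 1 from rfl, Real.rpow_add hr, Real.rpow_one]
  have hr2 : r ^ (σ + 2) = r ^ σ * r ^ 2 := by
    rw [Real.rpow_add hr, Real.rpow_two]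
  rw [hDD, hrr, hr2]
  -- now a polynomial identity
  generalize (r ^ σ * r ^ 2 + C) ^ (-(β + 2)) = u
  generalize A ^ (β / 2) = K
  generalize r ^ σ = x
  rw [hβdef, hAdef]
  field_simp
  ring
end

section
/- Let N ≥ 3, σ > -2, m ∈ (0,1), and p > p_c(σ) = m(N+σ)/(N-2). Then the function u(x) = K |x|^{-(σ+2)/(p-m)} with K = [m(σ+2)(N-2)(p - p_c(σ))/(p-m)^2]^{1/(p-m)} is a stationary solution of the equation, i.e. Δ(u^m) + |x|^σ u^p = 0 on ℝ^N \ {0}. -/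
open Real Filter Topology

private lemma aux_deriv_rpow (C β : ℝ) {r : ℝ} (hr : 0 < r) :
    HasDerivAt (fun s : ℝ => C * s ^ β) (C * β * r ^ (β - 1)) r := by
  have h := (Real.hasDerivAt_rpow_const (x := r) (p := β) (Or.inl hr.ne')).const_mul C
  rw [mul_assoc]; exact h

/-- for p > p_c(σ), u(r) = K r^{-(σ+2)/(p-m)} with
K = [m(σ+2)(N-2)(p-p_c(σ))/(p-m)²]^{1/(p-m)} is a stationary solution:
(u^m)'' + (N-1)/r (u^m)' + r^σ u^p = 0 for r > 0
(the radial form of Δ(u^m) + |x|^σ u^p = 0 on ℝ^N \ {0}). -/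
theorem stmt6 (N σ m p : ℝ) (hN : 3 ≤ N) (hσ : -2 < σ) (hm0 : 0 < m) (hm1 : m < 1)
    (hp : m * (N + σ) / (N - 2) < p) :
    let K := (m * (σ + 2) * (N - 2) * (p - m * (N + σ) / (N - 2)) / (p - m) ^ 2) ^ (1 / (p - m))
    ∀ r : ℝ, 0 < r →
      deriv (deriv (fun s : ℝ => (K * s ^ (-(σ + 2) / (p - m))) ^ m)) r
      + (N - 1) / r * deriv (fun s : ℝ => (K * s ^ (-(σ + 2) / (p - m))) ^ m) r
      + r ^ σ * (K * r ^ (-(σ + 2) / (p - m))) ^ p = 0 := by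
  intro K r hr
  have hN2 : (0:ℝ) < N - 2 := by linarith
  have hσ2 : (0:ℝ) < σ + 2 := by linarith
  have hpm : 0 < p - m := by
    have h2 : m < m * (N + σ) / (N - 2) := by
      rw [lt_div_iff₀ hN2]; nlinarith
    linarith
  have hppc : 0 < p - m * (N + σ) / (N - 2) := sub_pos.2 hp
  set Xv := m * (σ + 2) * (N - 2) * (p - m * (N + σ) / (N - 2)) / (p - m) ^ 2 with hXv
  have hXpos : 0 < Xv := div_pos
    (mul_pos (mul_pos (mul_pos hm0 hσ2) hN2) hppc) (pow_pos hpm 2)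
  have hKdef : K = Xv ^ (1 / (p - m)) := rfl
  have hK : 0 < K := by rw [hKdef]; exact Real.rpow_pos_of_pos hXpos _
  have hKpm : K ^ (p - m) = Xv := by
    rw [hKdef, ← Real.rpow_mul hXpos.le, one_div, inv_mul_cancel₀ hpm.ne', Real.rpow_one]
  set a := -(σ + 2) / (p - m) with ha
  -- the function equals K^m * s^(a*m) near any positive point
  have hEqs : ∀ s : ℝ, 0 < s →
      (fun t : ℝ => (K * t ^ a) ^ m) =ᶠ[𝓝 s] (fun t => K ^ m * t ^ (a * m)) := by
    intro s hs
    filter_upwards [Ioi_mem_nhds hs] with t ht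
    rw [Real.mul_rpow hK.le (Real.rpow_pos_of_pos ht a).le, ← Real.rpow_mul (le_of_lt ht)]
  have hd1 : ∀ s : ℝ, 0 < s →
      deriv (fun t : ℝ => (K * t ^ a) ^ m) s = K ^ m * (a * m) * s ^ (a * m - 1) := by
    intro s hs
    rw [(hEqs s hs).deriv_eq, (aux_deriv_rpow (K ^ m) (a * m) hs).deriv]
  have hEq2 : deriv (fun t : ℝ => (K * t ^ a) ^ m)
      =ᶠ[𝓝 r] (fun s => K ^ m * (a * m) * s ^ (a * m - 1)) := by
    filter_upwards [Ioi_mem_nhds hr] with s hs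
    exact hd1 s hs
  have hd2 : deriv (deriv (fun t : ℝ => (K * t ^ a) ^ m)) r
      = K ^ m * (a * m) * (a * m - 1) * r ^ (a * m - 2) := by
    rw [hEq2.deriv_eq, (aux_deriv_rpow (K ^ m * (a * m)) (a * m - 1) hr).deriv,
      show a * m - 1 - 1 = a * m - 2 by ring]
  have hKp : K ^ p = K ^ m * Xv := by
    rw [← hKpm, ← Real.rpow_add hK]
    congr 1; ring
  have e1 : r ^ (a * m - 1) = r ^ (a * m - 2) * r := by
    rw [show a * m - 1 = (a * m - 2) + 1 by ring, Real.rpow_add hr, Real.rpow_one]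
  have e2 : r ^ σ * r ^ (a * p) = r ^ (a * m - 2) := by
    rw [← Real.rpow_add hr]
    congr 1
    rw [ha]; field_simp; ring
  have h3 : r ^ σ * (K * r ^ a) ^ p = K ^ m * Xv * r ^ (a * m - 2) := by
    rw [Real.mul_rpow hK.le (Real.rpow_pos_of_pos hr a).le, ← Real.rpow_mul hr.le, hKp]
    linear_combination (K ^ m * Xv) * e2
  have hkey : (a * m) * (a * m - 1) + (N - 1) * (a * m) + Xv = 0 := by
    rw [ha, hXv]
    field_simp
    ring
  rw [hd2, hd1 r hr, h3, e1]
  have hr' : r ≠ 0 := hr.ne'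
  field_simp
  linear_combination (K ^ m * r ^ (a * m - 2)) * hkey
end

section
/- Let N ≥ 3, m ∈ (0,1), σ > -2, p = p_s(σ) = m(N+2σ+2)/(N-2). Then the flow expression E(X,Y; p_s(σ)) across the cylinder Z = -((N+σ)/(N-2))(mY+N-2)Y, given by E(X,Y;p) = ((N+σ)/(N-2))[(p_s(σ)-p)Y²(mY+N-2) - X(1+((p-m)/(σ+2))Y)(2mY+N-2)], satisfies E(X,Y;p_s(σ)) = -(N+σ) X (1 + 2mY/(N-2))² ≤ 0 for all X ≥ 0 and Y ∈ ℝ, with strict inequality when X > 0 and Y ≠ -(N-2)/(2m). -/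
/-- at p = p_s(σ) the flow expression across the cylinder satisfies
E(X,Y;p_s(σ)) = -(N+σ)X(1+2mY/(N-2))² ≤ 0 for X ≥ 0, strictly negative for X > 0
and Y ≠ -(N-2)/(2m). -/
theorem stmt10 (N σ m : ℝ) (hN : 3 ≤ N) (hm0 : 0 < m) (hm1 : m < 1) (hσ : -2 < σ) :
    let ps := m * (N + 2 * σ + 2) / (N - 2)
    let E : ℝ → ℝ → ℝ → ℝ := fun X Y p =>
      ((N + σ) / (N - 2)) *
        ((ps - p) * Y ^ 2 * (m * Y + N - 2)
          - X * (1 + ((p - m) / (σ + 2)) * Y) * (2 * m * Y + N - 2))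
    (∀ X Y : ℝ, E X Y ps = -(N + σ) * X * (1 + 2 * m * Y / (N - 2)) ^ 2) ∧
    (∀ X Y : ℝ, 0 ≤ X → E X Y ps ≤ 0) ∧
    (∀ X Y : ℝ, 0 < X → Y ≠ -(N - 2) / (2 * m) → E X Y ps < 0) := by
  intro ps E
  have hN2 : (0:ℝ) < N - 2 := by linarith
  have hN2' : (N:ℝ) - 2 ≠ 0 := ne_of_gt hN2
  have hσ2 : (0:ℝ) < σ + 2 := by linarith
  have hσ2' : (σ:ℝ) + 2 ≠ 0 := ne_of_gt hσ2
  have hNσ : (0:ℝ) < N + σ := by linarith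
  have key : ∀ X Y : ℝ, E X Y ps = -(N + σ) * X * (1 + 2 * m * Y / (N - 2)) ^ 2 := by
    intro X Y
    show ((N + σ) / (N - 2)) *
        ((ps - ps) * Y ^ 2 * (m * Y + N - 2)
          - X * (1 + ((ps - m) / (σ + 2)) * Y) * (2 * m * Y + N - 2)) =
      -(N + σ) * X * (1 + 2 * m * Y / (N - 2)) ^ 2
    have hpm : ps - m = 2 * m * (σ + 2) / (N - 2) := by
      show m * (N + 2 * σ + 2) / (N - 2) - m = 2 * m * (σ + 2) / (N - 2)
      field_simp
      ring
    rw [hpm]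
    field_simp
    ring
  refine ⟨key, ?_, ?_⟩
  · intro X Y hX
    rw [key]
    have : 0 ≤ (N + σ) * X * (1 + 2 * m * Y / (N - 2)) ^ 2 := by positivity
    linarith
  · intro X Y hX hY
    rw [key]
    have hne : 1 + 2 * m * Y / (N - 2) ≠ 0 := by
      intro h
      apply hY
      field_simp at h
      field_simp
      linarith
    have : 0 < (N + σ) * X * (1 + 2 * m * Y / (N - 2)) ^ 2 := by positivity
    linarith
end

section
/- Let N ≥ 3, m ∈ (m_c, 1), σ > -2, p > 1 + σ(1-m)/2, L = σ(m-1)+2(p-1). The matrix M(P_3) = [[0, 2(σ+2)(mN-N+2)/L, 0],[L/((1-m)(σ+2)), A, -1],[0, 0, -L/(1-m)]] (for any real A) has one eigenvalue equal to -L/(1-m) < 0, and the other two eigenvalues λ_1, λ_2 satisfy λ_1 λ_2 = -2(mN-N+2)/(1-m) < 0; hence M(P_3) has exactly one positive and two negative real eigenvalues (counting that λ_1, λ_2 are real of opposite signs). -/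
/-- the matrix M(P_3) has the eigenvalue -L/(1-m) < 0, and two further
real eigenvalues λ₁ > 0 > λ₂ with λ₁λ₂ = -2(mN-N+2)/(1-m) < 0; hence exactly one
positive and two negative real eigenvalues. -/
theorem stmt12 (N σ m p A : ℝ) (hN : 3 ≤ N) (hmc : (N - 2) / N < m) (hm1 : m < 1)
    (hσ : -2 < σ) (hp : 1 + σ * (1 - m) / 2 < p)
    (hL : 0 < σ * (m - 1) + 2 * (p - 1)) :
    let L := σ * (m - 1) + 2 * (p - 1)
    let M : Matrix (Fin 3) (Fin 3) ℝ :=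
      !![0, 2 * (σ + 2) * (m * N - N + 2) / L, 0;
         L / ((1 - m) * (σ + 2)), A, -1;
         0, 0, -L / (1 - m)]
    (-L / (1 - m) < 0 ∧ ∃ v : Fin 3 → ℝ, v ≠ 0 ∧ M.mulVec v = (-L / (1 - m)) • v) ∧
    (-2 * (m * N - N + 2) / (1 - m) < 0) ∧
    ∃ lam1 lam2 : ℝ,
      (∃ v : Fin 3 → ℝ, v ≠ 0 ∧ M.mulVec v = lam1 • v) ∧
      (∃ v : Fin 3 → ℝ, v ≠ 0 ∧ M.mulVec v = lam2 • v) ∧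
      lam1 * lam2 = -2 * (m * N - N + 2) / (1 - m) ∧ 0 < lam1 ∧ lam2 < 0 := by
  intro L M
  have hN0 : (0:ℝ) < N := by linarith
  have hQ : 0 < m * N - N + 2 := by
    have := (div_lt_iff₀ hN0).mp hmc
    nlinarith
  have h1m : 0 < 1 - m := by linarith
  have hσ2 : 0 < (σ:ℝ) + 2 := by linarith
  have hL0 : (0:ℝ) < L := hL
  have hLne : (L:ℝ) ≠ 0 := ne_of_gt hL0
  have h1mne : (1:ℝ) - m ≠ 0 := ne_of_gt h1m
  have hσ2ne : (σ:ℝ) + 2 ≠ 0 := ne_of_gt hσ2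
  set b : ℝ := 2 * (σ + 2) * (m * N - N + 2) / L with hb
  set c : ℝ := L / ((1 - m) * (σ + 2)) with hc
  set μ : ℝ := -L / (1 - m) with hμ
  have hbpos : 0 < b := by
    rw [hb]; exact div_pos (by nlinarith [mul_pos hσ2 hQ]) hL0
  have hcpos : 0 < c := by
    rw [hc]; exact div_pos hL0 (mul_pos h1m hσ2)
  have hbc : c * b = 2 * (m * N - N + 2) / (1 - m) := by
    rw [hb, hc]; field_simp
  have hμneg : μ < 0 := by
    rw [hμ]; apply div_neg_of_neg_of_pos <;> linarith
  have hμne : μ ≠ 0 := ne_of_lt hμneg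
  have key : ∀ x y z lam : ℝ,
      b * y = lam * x →
      c * x + A * y + -z = lam * y →
      (μ = lam ∨ z = 0) →
      M.mulVec ![x, y, z] = lam • ![x, y, z] := by
    intro x y z lam h1 h2 h3
    funext i
    fin_cases i <;> simp [M, Matrix.mulVec, dotProduct, Fin.sum_univ_three]
    · exact h1
    · rw [← hc]; linarith
    · exact h3
  constructor
  · refine ⟨hμneg, ?_⟩
    by_cases hK : c * b + μ * A - μ ^ 2 = 0
    · refine ⟨![b, μ, 0], ?_, key b μ 0 μ (mul_comm b μ)
        (by linear_combination hK) (Or.inr rfl)⟩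
      intro h
      have := congrFun h 1
      simp at this
      exact hμne this
    · set K : ℝ := c * b + μ * A - μ ^ 2 with hKdef
      refine ⟨![b / K, μ / K, 1], ?_, key _ _ _ μ ?_ ?_ (Or.inl rfl)⟩
      · intro h
        have := congrFun h 2
        simp at this
      · field_simp
      · field_simp
        linear_combination hKdef
  refine ⟨by apply div_neg_of_neg_of_pos <;> linarith, ?_⟩
  have hDpos : 0 < A ^ 2 + 4 * (c * b) := by positivity
  set s : ℝ := Real.sqrt (A ^ 2 + 4 * (c * b)) with hsdef
  have hs0 : 0 ≤ s := Real.sqrt_nonneg _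
  have hs : s ^ 2 = A ^ 2 + 4 * (c * b) := Real.sq_sqrt (le_of_lt hDpos)
  have hcb : 0 < c * b := mul_pos hcpos hbpos
  have hsA1 : -A < s := by nlinarith [sq_nonneg (s + A)]
  have hsA2 : A < s := by nlinarith [sq_nonneg (s - A)]
  refine ⟨(A + s) / 2, (A - s) / 2, ?_, ?_, ?_, by linarith, by linarith⟩
  · refine ⟨![b, (A + s) / 2, 0], ?_, key _ _ _ _ (mul_comm _ _)
      (by linear_combination (-1/4 : ℝ) * hs) (Or.inr rfl)⟩
    intro h
    have := congrFun h 0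
    simp at this
    exact (ne_of_gt hbpos) this
  · refine ⟨![b, (A - s) / 2, 0], ?_, key _ _ _ _ (mul_comm _ _)
      (by linear_combination (-1/4 : ℝ) * hs) (Or.inr rfl)⟩
    intro h
    have := congrFun h 0
    simp at this
    exact (ne_of_gt hbpos) this
  · rw [hbc] at hs
    have hx : s ^ 2 * (1 - m) = A ^ 2 * (1 - m) + 8 * (m * N - N + 2) := by
      field_simp at hs
      linarith
    rw [eq_div_iff h1mne]
    linear_combination (-1/4 : ℝ) * hx
end

section
/- Let N ≥ 3, m ∈ (0,1), σ ∈ (-2, 0), p > 1. Consider a C² trajectory (X,Y,Z):ℝ→ℝ³ of the system Ẋ = X(2+(1-m)Y), Ẏ = X-(N-2)Y-Z-mY²+((p-m)/(σ+2))XY, Ż = Z(σ+2+(p-m)Y), with X(η) > 0 and Z(η) > 0 for all η. If at some η_0 one has Y(η_0) = 0 and Ẏ(η_0) = 0, then X(η_0) = Z(η_0) and Ÿ(η_0) = -σ X(η_0) > 0; in particular η_0 cannot be a strict local maximum of Y with Y(η_0) = 0. -/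
/-- tangency argument for the backward self-similar system with
σ ∈ (-2,0): if Y(η₀) = 0 and Ẏ(η₀) = 0 along a trajectory with X, Z > 0, then
X(η₀) = Z(η₀), Ÿ(η₀) = -σX(η₀) > 0, and η₀ is not a strict local maximum of Y. -/
theorem stmt17 (N σ m p : ℝ) (hN : 3 ≤ N) (hm0 : 0 < m) (hm1 : m < 1)
    (hσ1 : -2 < σ) (hσ2 : σ < 0) (hp : 1 < p)
    (X Y Z : ℝ → ℝ)
    (hX : Differentiable ℝ X) (hY : Differentiable ℝ Y) (hZ : Differentiable ℝ Z)
    (hXpos : ∀ η, 0 < X η) (hZpos : ∀ η, 0 < Z η)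
    (hXeq : ∀ η, deriv X η = X η * (2 + (1 - m) * Y η))
    (hYeq : ∀ η, deriv Y η =
      X η - (N - 2) * Y η - Z η - m * (Y η) ^ 2 + ((p - m) / (σ + 2)) * X η * Y η)
    (hZeq : ∀ η, deriv Z η = Z η * (σ + 2 + (p - m) * Y η)) :
    ∀ η₀ : ℝ, Y η₀ = 0 → deriv Y η₀ = 0 →
      X η₀ = Z η₀ ∧
      deriv (deriv Y) η₀ = -σ * X η₀ ∧
      0 < deriv (deriv Y) η₀ ∧
      ¬ (∀ᶠ η in nhdsWithin η₀ {η₀}ᶜ, Y η < Y η₀) := by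
  intro η₀ hY0 hY'0
  have hXZ : X η₀ = Z η₀ := by
    have := hYeq η₀
    rw [hY0, hY'0] at this
    nlinarith [this]
  have hYfun : deriv Y = fun η =>
      X η - (N - 2) * Y η - Z η - m * (Y η) ^ 2 + ((p - m) / (σ + 2)) * X η * Y η :=
    funext hYeq
  have hXd := (hX η₀).hasDerivAt
  have hYd := (hY η₀).hasDerivAt
  have hZd := (hZ η₀).hasDerivAt
  have hF : HasDerivAt (fun η =>
      X η - (N - 2) * Y η - Z η - m * (Y η) ^ 2 + ((p - m) / (σ + 2)) * X η * Y η)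
      (deriv X η₀ - (N - 2) * deriv Y η₀ - deriv Z η₀
        - m * (2 * Y η₀ ^ 1 * deriv Y η₀)
        + ((p - m) / (σ + 2)) * (deriv X η₀ * Y η₀ + X η₀ * deriv Y η₀)) η₀ := by
    simpa [mul_assoc, Pi.sub_def, Pi.add_def] using (((hXd.sub (hYd.const_mul (N - 2))).sub hZd).sub
      ((hYd.pow 2).const_mul m)).add (((hXd.mul hYd).const_mul ((p - m) / (σ + 2))))
  have hval : deriv X η₀ - (N - 2) * deriv Y η₀ - deriv Z η₀
        - m * (2 * Y η₀ ^ 1 * deriv Y η₀)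
        + ((p - m) / (σ + 2)) * (deriv X η₀ * Y η₀ + X η₀ * deriv Y η₀) = -σ * X η₀ := by
    rw [hXeq, hZeq, hY0, hY'0, hXZ]; ring
  rw [hval] at hF
  have hdd : deriv (deriv Y) η₀ = -σ * X η₀ := by
    rw [hYfun]; exact hF.deriv
  have hpos : 0 < -σ * X η₀ := mul_pos (by linarith) (hXpos η₀)
  refine ⟨hXZ, hdd, hdd ▸ hpos, ?_⟩
  intro hcontra
  -- deriv Y has positive derivative at η₀ and deriv Y η₀ = 0
  have hG : HasDerivAt (deriv Y) (-σ * X η₀) η₀ := by rw [hYfun]; exact hF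
  have hslope := hasDerivAt_iff_tendsto_slope.1 hG
  have hev : ∀ᶠ η in nhdsWithin η₀ {η₀}ᶜ, 0 < slope (deriv Y) η₀ η :=
    hslope.eventually (eventually_gt_nhds hpos)
  have hev' : ∀ᶠ η in nhdsWithin η₀ (Set.Ioi η₀), 0 < deriv Y η := by
    have h1 : ∀ᶠ η in nhdsWithin η₀ (Set.Ioi η₀), 0 < slope (deriv Y) η₀ η :=
      (hev.filter_mono (nhdsWithin_mono _ (fun x hx => ne_of_gt hx)))
    filter_upwards [h1, self_mem_nhdsWithin] with η h hη
    have hlt : (0:ℝ) < η - η₀ := sub_pos.2 hη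
    have := h
    rw [slope_def_field, hY'0, sub_zero] at h
    exact (div_pos_iff.1 h).elim (fun h => h.1) (fun h => absurd hlt (by linarith [h.2]))
  obtain ⟨u, hu, hsub⟩ := mem_nhdsGT_iff_exists_Ioo_subset.1 hev'
  set b : ℝ := (η₀ + u) / 2 with hb
  have hbu : b < u := by rw [hb]; simp at hu ⊢; linarith [hu]
  have hηb : η₀ < b := by rw [hb]; simp at hu ⊢; linarith [hu]
  have hmono : StrictMonoOn Y (Set.Icc η₀ b) := by
    apply strictMonoOn_of_deriv_pos (convex_Icc _ _) hY.continuous.continuousOn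
    intro x hx
    rw [interior_Icc] at hx
    exact hsub ⟨hx.1, lt_trans hx.2 hbu⟩
  have hmem : Set.Ioo η₀ b ∈ nhdsWithin η₀ (Set.Ioi η₀) :=
    Ioo_mem_nhdsGT_of_mem ⟨le_rfl, hηb⟩
  have hcon' : ∀ᶠ η in nhdsWithin η₀ (Set.Ioi η₀), Y η < Y η₀ :=
    hcontra.filter_mono (nhdsWithin_mono _ (fun x hx => ne_of_gt hx))
  have : ∀ᶠ η in nhdsWithin η₀ (Set.Ioi η₀), False := by
    filter_upwards [hcon', hmem] with η h1 h2
    have := hmono (Set.left_mem_Icc.2 hηb.le) ⟨h2.1.le, h2.2.le⟩ h2.1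
    linarith
  exact this.exists.elim (fun _ h => h)
end
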